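/- Every metric space on 2, 3, or 4 points either has at least as many distinct lines as points or has a universal line. -/

import Mathlib

def line {α : Type*} [MetricSpace α] (u v : α) : Set α :=
  {p | dist p u + dist u v = dist p v ∨ dist u p + dist p v = dist u v ∨
       dist u v + dist v p = dist u p}

def OneTwo (α : Type*) [MetricSpace α] : Prop :=
  ∀ x y : α, x ≠ y → dist x y = 1 ∨ dist x y = 2

def Twins {α : Type*} [MetricSpace α] (u v : α) : Prop :=
  dist u v = 2 ∧ ∀ w : α, w ≠ u → w ≠ v → dist u w = dist v w

def linesOf (α : Type*) [MetricSpace α] : Set (Set α) :=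
  {L | ∃ u v : α, u ≠ v ∧ L = line u v}

/-!
Call `u, v, w` collinear when `w ∈ line u v`; this relation is symmetric in the three points, so a
collinear triple lies on the line through any two of its points. If some point `d` lies on no line
through two other points, the lines `x d` (`x ≠ d`) are pairwise distinct and differ from any line
`a b` with `a, b ≠ d`, which gives as many lines as points. Otherwise take a collinear triple; if it
misses a point `e`, a collinear triple through `e` shares two points with it (there are at most four
points), and the line through those two contains every point.
-/

section

variable {α : Type*} [MetricSpace α]

theorem left_mem_line (u v : α) : u ∈ line u v :=
  Or.inl (by simp)

theorem right_mem_line (u v : α) : v ∈ line u v :=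
  Or.inr (Or.inr (by simp))

theorem mem_line_comm {u v w : α} : w ∈ line u v ↔ w ∈ line v u := by
  simp only [line, Set.mem_ofPred_eq, dist_comm w, dist_comm v u, add_comm]
  tauto

theorem mem_line_swap {u v w : α} : w ∈ line u v ↔ v ∈ line u w := by
  simp only [line, Set.mem_ofPred_eq, dist_comm w u, dist_comm v u, dist_comm w v, add_comm]
  tauto

theorem line_self (u : α) : line u u = Set.univ := by
  ext; simp [line]

theorem subset_line_of_mem_line {a b c x y : α} (h : c ∈ line a b)
    (hx : x ∈ ({a, b, c} : Set α)) (hy : y ∈ ({a, b, c} : Set α)) :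
    ({a, b, c} : Set α) ⊆ line x y := by
  have hba : c ∈ line b a := mem_line_comm.1 h
  have hac : b ∈ line a c := mem_line_swap.1 h
  have hca : b ∈ line c a := mem_line_comm.1 hac
  have hbc : a ∈ line b c := mem_line_swap.1 hba
  have hcb : a ∈ line c b := mem_line_comm.1 hbc
  rintro p (rfl | rfl | rfl) <;> rcases hx with rfl | rfl | rfl <;>
    rcases hy with rfl | rfl | rfl <;>
    first
    | assumption
    | exact left_mem_line _ _
    | exact right_mem_line _ _
    | simp only [line_self, Set.mem_univ]

def InGeneralPosition (d : α) : Prop :=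
  ∀ x y : α, x ≠ d → y ≠ d → x ≠ y → d ∉ line x y

theorem card_le_ncard_linesOf [Fintype α] {d : α} (hd : InGeneralPosition d)
    (hα : 3 ≤ Fintype.card α) : Fintype.card α ≤ (linesOf α).ncard := by
  classical
  obtain ⟨a, ha, b, hb, hab⟩ := Finset.one_lt_card.1 <| show 1 < (Finset.univ.erase d).card by
    rw [Finset.card_erase_of_mem (Finset.mem_univ d), Finset.card_univ]; omega
  rw [Finset.mem_erase] at ha hb
  have hd_ab : d ∉ line a b := hd a b ha.1 hb.1 hab
  have line_left_inj : ∀ x y, x ≠ d → y ≠ d → line x d = line y d → x = y := by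
    intro x y hx hy hxy
    by_contra hne
    exact hd x y hx hy hne (mem_line_swap.1 (hxy ▸ left_mem_line y d))
  let f : α → Set α := fun x => if x = d then line a b else line x d
  rw [← Nat.card_eq_fintype_card, ← Set.ncard_univ]
  refine Set.ncard_le_ncard_of_injOn f ?_ ?_
  · intro x _
    by_cases hx : x = d
    · exact ⟨a, b, hab, if_pos hx⟩
    · exact ⟨x, d, hx, if_neg hx⟩
  · intro x _ y _ hxy
    by_cases hx : x = d <;> by_cases hy : y = d <;> simp only [f, hx, hy, if_true, if_false] at hxy
    · exact hx.trans hy.symm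
    · exact absurd (hxy ▸ right_mem_line y d) hd_ab
    · exact absurd (hxy ▸ right_mem_line x d) hd_ab
    · exact line_left_inj x y hx hy hxy

theorem exists_inGeneralPosition_or_line_eq_univ [Fintype α] [Nonempty α]
    (hα : Fintype.card α ≤ 4) :
    (∃ d : α, InGeneralPosition d) ∨ ∃ u v : α, u ≠ v ∧ line u v = Set.univ := by
  by_contra! ⟨hcol, hnot⟩
  simp only [InGeneralPosition, not_forall, not_not, exists_prop] at hcol
  obtain ⟨d⟩ := ‹Nonempty α›
  obtain ⟨x, y, hxd, hyd, hxy, hdxy⟩ := hcol d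
  obtain ⟨e, he⟩ : ∃ e, e ∉ ({x, y, d} : Set α) := by
    by_contra! hcover
    exact hnot x y hxy <| Set.eq_univ_of_forall fun p =>
      subset_line_of_mem_line hdxy (by simp) (by simp) (hcover p)
  have hcard : ({e, x, y, d} : Set α).ncard = 4 := by
    rw [Set.ncard_insert_of_notMem he, Set.ncard_eq_three.2 ⟨x, y, d, hxy, hxd, hyd, rfl⟩]
  have hall : ({e, x, y, d} : Set α) = Set.univ :=
    Set.eq_of_subset_of_ncard_le (Set.subset_univ _)
      (by rw [Set.ncard_univ, Nat.card_eq_fintype_card, hcard]; exact hα)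
  have mem_triple : ∀ p, p ≠ e → p ∈ ({x, y, d} : Set α) := fun p hp =>
    (Set.mem_insert_iff.1 (hall ▸ Set.mem_univ p)).resolve_left hp
  obtain ⟨x', y', hx'e, hy'e, hxy', hexy⟩ := hcol e
  refine hnot x' y' hxy' (Set.eq_univ_of_univ_subset ?_)
  rw [← hall]
  exact Set.insert_subset hexy
    (subset_line_of_mem_line hdxy (mem_triple x' hx'e) (mem_triple y' hy'e))

end

theorem stmt16 (α : Type*) [MetricSpace α] [Fintype α]
    (hn : Fintype.card α = 2 ∨ Fintype.card α = 3 ∨ Fintype.card α = 4) :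
    Fintype.card α ≤ (linesOf α).ncard ∨
      ∃ u v : α, u ≠ v ∧ line u v = Set.univ := by
  rcases hn with h2 | h34
  · obtain ⟨u, v, huv, hpair⟩ := Nat.card_eq_two_iff.1 (Nat.card_eq_fintype_card.trans h2)
    exact Or.inr ⟨u, v, huv, Set.eq_univ_of_univ_subset <|
      hpair ▸ Set.pair_subset (left_mem_line u v) (right_mem_line u v)⟩
  · have : Nonempty α := Fintype.card_pos_iff.1 (by omega)
    exact (exists_inGeneralPosition_or_line_eq_univ (by omega)).imp_left
      fun ⟨_, hd⟩ => card_le_ncard_linesOf hd (by omega)
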